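/- arXiv:2404.05033 — 2 statements merged into one kernel-verified Lean document; each statement's English description precedes it below -/
import Mathlib

section
/- Letting L be the subgroup of A generated by {e₁ + e₂, e₂ + e₃, m₁ + m₂ + m₃}, for every pair of distinct i, j ∈ {1,2,3} the map φᵢⱼ maps L onto L; i.e. all three S-domain walls condense on the m₁m₂m₃-boundary. -/
/-- The group of topological excitations of three copies of the 3D toric code:
pairs (a, b) of electric/magnetic labels in `(ZMod 2)³`. -/
abbrev A : Type := (Fin 3 → ZMod 2) × (Fin 3 → ZMod 2)

/-- The electric charge `eᵢ`. -/
def e (i : Fin 3) : A := (Pi.single i 1, 0)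

/-- The magnetic flux `mᵢ`. -/
def m (i : Fin 3) : A := (0, Pi.single i 1)

/-- The mutual-statistics pairing `ω((a,b),(a',b')) = a·b' + a'·b`. -/
def ω (x y : A) : ZMod 2 :=
  (∑ t, x.1 t * y.2 t) + (∑ t, y.1 t * x.2 t)

/-- The action of the S-domain wall `s⁽²⁾ᵢⱼ` on excitations:
`(a, b) ↦ (a + bⱼ•δᵢ + bᵢ•δⱼ, b)`. -/
def φ (i j : Fin 3) (x : A) : A :=
  (x.1 + x.2 j • (Pi.single i 1 : Fin 3 → ZMod 2) + x.2 i • (Pi.single j 1 : Fin 3 → ZMod 2), x.2)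

/-- A subgroup `L` of `A` is Lagrangian if it equals its orthogonal complement
with respect to the pairing `ω`. -/
def IsLagrangian (L : AddSubgroup A) : Prop :=
  (L : Set A) = {x : A | ∀ l ∈ L, ω x l = 0}

lemma phi_add (i j : Fin 3) (x y : A) : φ i j (x + y) = φ i j x + φ i j y := by
  simp only [φ, Prod.fst_add, Prod.snd_add, Pi.add_apply, add_smul, Prod.mk_add_mk]
  rw [Prod.mk.injEq]; exact ⟨by abel, rfl⟩

lemma phi_neg (i j : Fin 3) (x : A) : φ i j (-x) = - φ i j x := by
  simp only [φ, Prod.fst_neg, Prod.snd_neg, Pi.neg_apply, neg_smul, Prod.neg_mk]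
  rw [Prod.mk.injEq]; exact ⟨by abel, rfl⟩

lemma phi_invol (i j : Fin 3) (x : A) : φ i j (φ i j x) = x := by
  simp only [φ]
  ext <;> simp <;> abel_nf <;>
    simp [two_smul, CharTwo.add_self_eq_zero]

lemma phi_snd_zero (i j : Fin 3) (a : Fin 3 → ZMod 2) : φ i j (a, 0) = (a, 0) := by
  simp [φ]

lemma e_add_e_mem (i j : Fin 3) :
    e i + e j ∈ AddSubgroup.closure {e 0 + e 1, e 1 + e 2, m 0 + m 1 + m 2} := by
  have h01 : e 0 + e 1 ∈ AddSubgroup.closure {e 0 + e 1, e 1 + e 2, m 0 + m 1 + m 2} :=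
    AddSubgroup.subset_closure (by simp)
  have h12 : e 1 + e 2 ∈ AddSubgroup.closure {e 0 + e 1, e 1 + e 2, m 0 + m 1 + m 2} :=
    AddSubgroup.subset_closure (by simp)
  fin_cases i <;> fin_cases j <;>
    simp only [show ((⟨0, by norm_num⟩ : Fin 3) : Fin 3) = 0 from rfl,
      show ((⟨1, by norm_num⟩ : Fin 3) : Fin 3) = 1 from rfl,
      show ((⟨2, by norm_num⟩ : Fin 3) : Fin 3) = 2 from rfl]
  · have : e 0 + e 0 = 0 := by decide
    rw [this]; exact zero_mem _
  · exact h01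
  · have : e 0 + e 2 = (e 0 + e 1) + (e 1 + e 2) := by decide
    rw [this]; exact add_mem h01 h12
  · have : e 1 + e 0 = e 0 + e 1 := by decide
    rw [this]; exact h01
  · have : e 1 + e 1 = 0 := by decide
    rw [this]; exact zero_mem _
  · exact h12
  · have : e 2 + e 0 = (e 0 + e 1) + (e 1 + e 2) := by decide
    rw [this]; exact add_mem h01 h12
  · have : e 2 + e 1 = e 1 + e 2 := by decide
    rw [this]; exact h12
  · have : e 2 + e 2 = 0 := by decide
    rw [this]; exact zero_mem _

lemma phi_m_eq (i j : Fin 3) (hij : i ≠ j) :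
    φ i j (m 0 + m 1 + m 2) = (m 0 + m 1 + m 2) + (e i + e j) := by
  revert hij; revert i j; decide

lemma phi_mem (i j : Fin 3) (hij : i ≠ j) (x : A)
    (hx : x ∈ AddSubgroup.closure {e 0 + e 1, e 1 + e 2, m 0 + m 1 + m 2}) :
    φ i j x ∈ AddSubgroup.closure {e 0 + e 1, e 1 + e 2, m 0 + m 1 + m 2} := by
  induction hx using AddSubgroup.closure_induction with
  | mem y hy =>
    rcases hy with rfl | rfl | rfl
    · rw [show φ i j (e 0 + e 1) = e 0 + e 1 from phi_snd_zero i j _]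
      exact AddSubgroup.subset_closure (by simp)
    · rw [show φ i j (e 1 + e 2) = e 1 + e 2 from phi_snd_zero i j _]
      exact AddSubgroup.subset_closure (by simp)
    · rw [phi_m_eq i j hij]
      exact add_mem (AddSubgroup.subset_closure (by simp)) (e_add_e_mem i j)
  | zero => rw [show φ i j 0 = 0 by simp [φ]]; exact zero_mem _
  | add x y hx hy ihx ihy => rw [phi_add]; exact add_mem ihx ihy
  | neg x hx ihx => rw [phi_neg]; exact neg_mem ihx


theorem stmt_13 :
    ∀ i j : Fin 3, i ≠ j →
      φ i j '' ((AddSubgroup.closure {e 0 + e 1, e 1 + e 2, m 0 + m 1 + m 2} :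
          AddSubgroup A) : Set A) =
        ((AddSubgroup.closure {e 0 + e 1, e 1 + e 2, m 0 + m 1 + m 2} :
          AddSubgroup A) : Set A) := by
  intro i j hij
  apply Set.eq_of_subset_of_subset
  · rintro y ⟨x, hx, rfl⟩
    exact phi_mem i j hij x hx
  · intro x hx
    exact ⟨φ i j x, phi_mem i j hij x hx, phi_invol i j x⟩
end

section
/- For any distinct i, j, k ∈ {1,2,3}, the image under φᵢⱼ of the subgroup of A generated by {m₁, m₂, m₃} equals the subgroup generated by {mᵢ + eⱼ, mⱼ + eᵢ, mₖ}, and this image is a different subgroup from the one generated by {m₁, m₂, m₃}; i.e. no S-domain wall condenses on the all-smooth (m₁, m₂, m₃)-boundary, and attaching s⁽²⁾ᵢⱼ produces the nested boundary (mᵢeⱼ, mⱼeᵢ, mₖ). -/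
/-
The wall acts additively, so it carries the subgroup generated by
the fluxes onto the subgroup generated by their images: `mᵢ ↦ mᵢ + eⱼ`, `mⱼ ↦ mⱼ + eᵢ`, `mₖ ↦ mₖ`.
The image is a different subgroup because `mᵢ + eⱼ` carries a nonzero electric label, while every
element of the flux subgroup has electric label `0`.
-/

theorem Fin.eq_or_eq_or_eq_of_ne {i j k : Fin 3} (hij : i ≠ j) (hjk : j ≠ k) (hik : i ≠ k)
    (x : Fin 3) : x = i ∨ x = j ∨ x = k := by
  omega

theorem Set.insert_insert_singleton_eq_range {α : Type*} (f : Fin 3 → α) {i j k : Fin 3}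
    (hij : i ≠ j) (hjk : j ≠ k) (hik : i ≠ k) : ({f i, f j, f k} : Set α) = Set.range f := by
  ext y
  constructor
  · rintro (rfl | rfl | rfl) <;> exact Set.mem_range_self _
  · rintro ⟨x, rfl⟩
    rcases Fin.eq_or_eq_or_eq_of_ne hij hjk hik x with rfl | rfl | rfl <;> simp

def φHom (i j : Fin 3) : A →+ A where
  toFun := φ i j
  map_zero' := by simp [φ]
  map_add' x y := by
    ext t
    · simp only [φ, Prod.fst_add, Prod.snd_add, Pi.add_apply, add_smul]
      abel
    · rfl

@[simp]
theorem coe_φHom (i j : Fin 3) : ⇑(φHom i j) = φ i j := rfl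

theorem φ_m_left {i j : Fin 3} (hij : i ≠ j) : φ i j (m i) = m i + e j := by
  simp [φ, m, e, Pi.single_eq_of_ne hij.symm]

theorem φ_m_right {i j : Fin 3} (hij : i ≠ j) : φ i j (m j) = m j + e i := by
  simp [φ, m, e, Pi.single_eq_of_ne hij]

theorem φ_m_of_ne {i j k : Fin 3} (hki : k ≠ i) (hkj : k ≠ j) : φ i j (m k) = m k := by
  simp [φ, m, Pi.single_eq_of_ne hki.symm, Pi.single_eq_of_ne hkj.symm]

theorem closure_range_m_le_ker_fst :
    AddSubgroup.closure (Set.range m) ≤ (AddMonoidHom.fst _ _ : A →+ _).ker := by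
  rw [AddSubgroup.closure_le]
  rintro _ ⟨t, rfl⟩
  rfl

theorem m_add_e_notMem_closure_range_m (i j : Fin 3) :
    m i + e j ∉ AddSubgroup.closure (Set.range m) := by
  intro h
  have hfst : (Pi.single j 1 : Fin 3 → ZMod 2) = 0 := by
    simpa [m, e] using AddMonoidHom.mem_ker.mp (closure_range_m_le_ker_fst h)
  simpa using congrFun hfst j

theorem stmt_15 (i j k : Fin 3) (hij : i ≠ j) (hjk : j ≠ k) (hik : i ≠ k) :
    φ i j '' ((AddSubgroup.closure {m 0, m 1, m 2} : AddSubgroup A) : Set A) =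
      ((AddSubgroup.closure {m i + e j, m j + e i, m k} : AddSubgroup A) : Set A) ∧
    AddSubgroup.closure {m i + e j, m j + e i, m k} ≠
      AddSubgroup.closure {m 0, m 1, m 2} := by
  have hfluxes : ({m 0, m 1, m 2} : Set A) = Set.range m :=
    Set.insert_insert_singleton_eq_range m (by decide) (by decide) (by decide)
  constructor
  · rw [hfluxes, ← Set.insert_insert_singleton_eq_range m hij hjk hik, ← coe_φHom,
      ← AddSubgroup.coe_map, AddMonoidHom.map_closure, Set.image_insert_eq, Set.image_insert_eq,
      Set.image_singleton, coe_φHom, φ_m_left hij, φ_m_right hij, φ_m_of_ne hik.symm hjk.symm]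
  · intro h
    apply m_add_e_notMem_closure_range_m i j
    rw [← hfluxes, ← h]
    exact AddSubgroup.subset_closure (Set.mem_insert _ _)
end
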